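/- Let ω ∈ S_n, let P ∈ Π(ω), and let i, j, k be pipes with i < j < k and ω⁻¹(i) > ω⁻¹(j) > ω⁻¹(k). If the contact graph P♯ has an arc i → k, then either (i ⪯_P j and k ⪯_P j) or (j ⪯_P i and j ⪯_P k). -/

import Mathlib

/-- A pipe dream of size `n` on the triangular shape, with boxes indexed by pairs
`(r, c)` of a row `r` and a column `c`, both `0`-indexed (rows increase southwards,
columns increase eastwards).  `cross r c = true` means that box `(r, c)` contains a
crossing tile; all other boxes contain elbow tiles.  Crossings are only allowed in
the full boxes of the triangular shape, i.e. those with `r + c + 2 ≤ n` (the boxes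
with `r + c + 1 = n` are the half-boxes on the antidiagonal, which are forced
elbows).  The `n` pipes enter horizontally on the left side in rows `0, …, n-1` and
exit vertically on the top side in columns `0, …, n-1`; pipe `k` is the pipe
entering at row `k`.  An elbow tile connects the west edge of its box to the north
edge (the pipe travelling through this elbow passes northwest of the tile) and the
south edge to the east edge (this pipe passes southeast of the tile); a crossing
tile connects west to east and south to north. -/
structure PipeDream (n : ℕ) where
  cross : ℕ → ℕ → Bool
  inShape : ∀ r c : ℕ, cross r c = true → r + c + 2 ≤ n

namespace PipeDream

variable {n : ℕ}

/-- `(P.pipes r c).1` is the label of the pipe entering box `(r, c)` from the west,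
and `(P.pipes r c).2` is the label of the pipe entering box `(r, c)` from the south
(junk value `0` if there is no box below box `(r, c)` in the triangular shape). -/
def pipes (P : PipeDream n) : ℕ → ℕ → ℕ × ℕ
  | r, c =>
    (if hc : c = 0 then r
      else if P.cross r (c - 1) then (pipes P r (c - 1)).1 else (pipes P r (c - 1)).2,
     if hr : r + c + 2 ≤ n then
        if P.cross (r + 1) c then (pipes P (r + 1) c).2 else (pipes P (r + 1) c).1
      else 0)
  termination_by r c => (n - r) + c
  decreasing_by all_goals omega

/-- The pipe entering box `(r, c)` from the west (travelling eastwards). -/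
def west (P : PipeDream n) (r c : ℕ) : ℕ := (pipes P r c).1

/-- The pipe entering box `(r, c)` from the south (travelling northwards). -/
def south (P : PipeDream n) (r c : ℕ) : ℕ := (pipes P r c).2

/-- The pipe exiting on the top side at column `c`. -/
def exitPipe (P : PipeDream n) (c : ℕ) : ℕ :=
  if P.cross 0 c then P.south 0 c else P.west 0 c

/-- `P` has exit permutation `ω`, i.e. the pipe exiting at column `c` is `ω c`;
equivalently, pipe `k` exits at column `ω⁻¹ k`. -/
def HasExitPerm (P : PipeDream n) (ω : Equiv.Perm (Fin n)) : Prop :=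
  ∀ c : Fin n, P.exitPipe c.val = (ω c).val

/-- `P` is reduced: any two of its pipes cross at most once. -/
def Reduced (P : PipeDream n) : Prop :=
  ∀ r c r' c' : ℕ, P.cross r c = true → P.cross r' c' = true → (r, c) ≠ (r', c') →
    ¬ ((P.west r c = P.west r' c' ∧ P.south r c = P.south r' c') ∨
        (P.west r c = P.south r' c' ∧ P.south r c = P.west r' c'))

/-- The arcs of the contact graph `P♯` of `P`: there is one arc for each elbow
contact of `P` (an elbow tile in a full box of the triangular shape), oriented from
the pipe passing northwest of the contact (the one travelling west-to-north) to the
pipe passing southeast of it (the one travelling south-to-east). -/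
def Arc (P : PipeDream n) (i j : ℕ) : Prop :=
  ∃ r c : ℕ, r + c + 2 ≤ n ∧ P.cross r c = false ∧ P.west r c = i ∧ P.south r c = j

/-- `P` is acyclic: its contact graph has no directed cycle. -/
def Acyclic (P : PipeDream n) : Prop := ∀ i : ℕ, ¬ Relation.TransGen P.Arc i i

/-- `i ⪯_P j` : there is a directed path (possibly empty) from `i` to `j` in the
contact graph of `P`. -/
def Path (P : PipeDream n) (i j : ℕ) : Prop := Relation.ReflTransGen P.Arc i j

/-- `π` is a linear extension of `P` : `π⁻¹ i < π⁻¹ j` for every arc `i → j` of the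
contact graph of `P`. -/
def LinExt (P : PipeDream n) (π : Equiv.Perm (Fin n)) : Prop :=
  ∀ i j : Fin n, P.Arc i.val j.val → π⁻¹ i < π⁻¹ j

/-- There is a contact (an elbow tile in a full box) between pipes `i` and `j`
at box `b`. -/
def ContactAt (P : PipeDream n) (i j : ℕ) (b : ℕ × ℕ) : Prop :=
  b.1 + b.2 + 2 ≤ n ∧ P.cross b.1 b.2 = false ∧
    ((P.west b.1 b.2 = i ∧ P.south b.1 b.2 = j) ∨
      (P.west b.1 b.2 = j ∧ P.south b.1 b.2 = i))

/-- `P'` is obtained from `P` by the flip exchanging the contact at box `b` with the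
crossing at box `b'` (a contact and a crossing between the same two pipes). -/
def IsFlip (P P' : PipeDream n) (b b' : ℕ × ℕ) : Prop :=
  b ≠ b' ∧
  P.cross b.1 b.2 = false ∧ P.cross b'.1 b'.2 = true ∧
  P'.cross b.1 b.2 = true ∧ P'.cross b'.1 b'.2 = false ∧
  (∀ r c : ℕ, (r, c) ≠ b → (r, c) ≠ b' → P.cross r c = P'.cross r c) ∧
  ((P.west b.1 b.2 = P.west b'.1 b'.2 ∧ P.south b.1 b.2 = P.south b'.1 b'.2) ∨
    (P.west b.1 b.2 = P.south b'.1 b'.2 ∧ P.south b.1 b.2 = P.west b'.1 b'.2))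

/-- There is an increasing flip from `P` to `P'`: a flip exchanging a contact at a
box `b` weakly southwest of the box `b'` of the corresponding crossing. -/
def IncFlip (P P' : PipeDream n) : Prop :=
  ∃ b b' : ℕ × ℕ, P.IsFlip P' b b' ∧ b'.1 ≤ b.1 ∧ b.2 ≤ b'.2

end PipeDream

/-- The weak order on permutations of `Fin n` : `π ≤ σ` if and only if
`Inv(π) ⊆ Inv(σ)`, where `Inv(π)` is the set of pairs `(i, j)` with `i < j` and
`π⁻¹ i > π⁻¹ j`. -/
def WeakLE {n : ℕ} (π σ : Equiv.Perm (Fin n)) : Prop :=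
  ∀ i j : Fin n, i < j → π⁻¹ j < π⁻¹ i → σ⁻¹ j < σ⁻¹ i

/-!
The arc `i → k` is an elbow in some column `c` where `i` turns north and `k` turns east. As `i`
exits to the right of `k`, it climbs column `c` and leaves it eastwards above `k`; `j`, which
exits between them, is present on the vertical line `c + 1` too. A pipe leaving column `c`
between the rows where `i` enters and leaves it has crossed `i` from the west, so it is smaller
than `i`; hence on line `c + 1` the pipe `j` lies above `i` or below `k`. Pipes start in
increasing order from top to bottom, so in the first case `i` crossed `j` from the west, and in
the second `j` crossed `k`.

It remains to see that if `w` crosses `s` from the west and `s` does not exit at the top of that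
column, then `s ⪯_P w`. After the crossing, `s` turns east above `w`, and in a reduced pipe
dream they never cross again. A downward induction over the vertical lines shows that a pipe
lying above another one that it never crosses from the west afterwards reaches it along the
elbow contacts between them.
-/

namespace PipeDream

variable {n : ℕ} (P : PipeDream n)

/-- The pipe leaving box `(r, c)` through its north edge. -/
def north (r c : ℕ) : ℕ := if P.cross r c then P.south r c else P.west r c

def CrossesAt (p q r c : ℕ) : Prop :=
  P.cross r c = true ∧ P.west r c = p ∧ P.south r c = q

variable {P}

lemma west_zero (r : ℕ) : P.west r 0 = r := by
  unfold west
  rw [pipes]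
  simp

lemma west_succ_of_cross {r c : ℕ} (h : P.cross r c = true) : P.west r (c + 1) = P.west r c := by
  unfold west
  rw [pipes]
  simp [h]

lemma west_succ_of_elbow {r c : ℕ} (h : P.cross r c = false) :
    P.west r (c + 1) = P.south r c := by
  unfold west
  rw [pipes]
  simp [h, south]

lemma south_eq_north_succ {r c : ℕ} (h : r + c + 2 ≤ n) : P.south r c = P.north (r + 1) c := by
  unfold south
  rw [pipes]
  simp [h, north, south, west]

lemma north_of_cross {r c : ℕ} (h : P.cross r c = true) : P.north r c = P.south r c := by
  simp [north, h]

lemma north_of_elbow {r c : ℕ} (h : P.cross r c = false) : P.north r c = P.west r c := by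
  simp [north, h]

lemma exitPipe_eq_north (c : ℕ) : P.exitPipe c = P.north 0 c := rfl

lemma north_eq_or_exists_west_succ_eq {s r c : ℕ} (hsr : s ≤ r) (hr : r + c + 1 ≤ n) :
    P.north s c = P.north r c ∨ ∃ t, s ≤ t ∧ t < r ∧ P.west t (c + 1) = P.north r c := by
  induction r with
  | zero => exact Or.inl (by rw [Nat.le_zero.mp hsr])
  | succ r ih =>
    rcases Nat.eq_or_lt_of_le hsr with rfl | hsr
    · exact Or.inl rfl
    rw [← P.south_eq_north_succ (by omega)]
    cases hx : P.cross r c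
    · exact Or.inr ⟨r, by omega, by omega, P.west_succ_of_elbow hx⟩
    · rw [← P.north_of_cross hx]
      rcases ih (by omega) (by omega) with h | ⟨t, hst, htr, ht⟩
      · exact Or.inl h
      · exact Or.inr ⟨t, hst, by omega, ht⟩

lemma exists_elbow_below {r c : ℕ} (h : r + c + 2 ≤ n) :
    ∃ r', r < r' ∧ r' + c + 1 ≤ n ∧ P.cross r' c = false ∧ P.west r' c = P.south r c ∧
      ∀ t, r < t → t < r' → P.cross t c = true ∧ P.south t c = P.south r c := by
  have hS := P.south_eq_north_succ h
  cases hx : P.cross (r + 1) c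
  · refine ⟨r + 1, by omega, by omega, hx, ?_, fun t h₁ h₂ => by omega⟩
    rw [hS, P.north_of_elbow hx]
  · obtain ⟨r', hr', hv, he, hw, hbetween⟩ := exists_elbow_below (P.inShape _ _ hx)
    rw [P.north_of_cross hx] at hS
    refine ⟨r', by omega, hv, he, hw.trans hS.symm, fun t h₁ h₂ => ?_⟩
    rcases Nat.eq_or_lt_of_le (Nat.succ_le_of_lt h₁) with rfl | h₁
    · exact ⟨hx, hS.symm⟩
    · obtain ⟨hc, hs⟩ := hbetween t h₁ h₂
      exact ⟨hc, hs.trans hS.symm⟩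
termination_by n - r

lemma west_succ_cases {r c : ℕ} (h : r + c + 2 ≤ n) :
    (P.cross r c = true ∧ P.west r (c + 1) = P.west r c) ∨
    (P.cross r c = false ∧ ∃ s, r < s ∧ s + c + 1 ≤ n ∧ P.cross s c = false ∧
      P.west s c = P.west r (c + 1) ∧
      ∀ t, r < t → t < s → P.cross t c = true ∧ P.south t c = P.west r (c + 1)) := by
  cases hx : P.cross r c
  · rw [P.west_succ_of_elbow hx]
    exact Or.inr ⟨rfl, P.exists_elbow_below h⟩
  · exact Or.inl ⟨rfl, P.west_succ_of_cross hx⟩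

lemma eq_of_west_eq {c r₁ r₂ : ℕ} (h₁ : r₁ + c + 1 ≤ n) (h₂ : r₂ + c + 1 ≤ n)
    (h : P.west r₁ c = P.west r₂ c) : r₁ = r₂ := by
  induction c generalizing r₁ r₂ with
  | zero => rwa [west_zero, west_zero] at h
  | succ c ih =>
    rcases P.west_succ_cases (r := r₁) (by omega) with
      ⟨hx₁, hw₁⟩ | ⟨hx₁, s₁, hs₁, hv₁, he₁, hw₁, hb₁⟩ <;>
    rcases P.west_succ_cases (r := r₂) (by omega) with
      ⟨hx₂, hw₂⟩ | ⟨hx₂, s₂, hs₂, hv₂, he₂, hw₂, hb₂⟩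
    · exact ih (by omega) (by omega) (by rw [← hw₁, ← hw₂, h])
    · have := ih (by omega) hv₂ (hw₁.symm.trans (h.trans hw₂.symm))
      simp [this, he₂] at hx₁
    · have := ih hv₁ (by omega) (hw₁.trans (h.trans hw₂))
      simp [← this, he₁] at hx₂
    · have := ih hv₁ hv₂ (hw₁.trans (h.trans hw₂.symm))
      subst this
      by_contra hne
      rcases Nat.lt_or_gt_of_ne hne with hlt | hlt
      · simp [(hb₁ r₂ hlt hs₂).1] at hx₂
      · simp [(hb₂ r₁ hlt hs₁).1] at hx₁

lemma exists_west_eq_west_succ {r c : ℕ} (h : r + c + 2 ≤ n) :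
    ∃ s, r ≤ s ∧ s + c + 1 ≤ n ∧ P.west s c = P.west r (c + 1) := by
  rcases P.west_succ_cases h with ⟨-, hw⟩ | ⟨-, s, hs, hv, -, hw, -⟩
  · exact ⟨r, le_rfl, by omega, hw.symm⟩
  · exact ⟨s, hs.le, hv, hw⟩

lemma exitPipe_ne_west_succ {r c : ℕ} (h : r + c + 2 ≤ n) :
    P.exitPipe c ≠ P.west r (c + 1) := by
  obtain ⟨x, hxv, hx, hfirst, hexit⟩ : ∃ x, x + c + 1 ≤ n ∧ P.cross x c = false ∧
      (∀ t, t < x → P.cross t c = true) ∧ P.exitPipe c = P.west x c := by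
    rw [exitPipe_eq_north]
    cases h₀ : P.cross 0 c
    · exact ⟨0, by omega, h₀, fun t ht => by omega, P.north_of_elbow h₀⟩
    · obtain ⟨x, hx₀, hxv, hx, hw, hbetween⟩ := P.exists_elbow_below (P.inShape _ _ h₀)
      refine ⟨x, hxv, hx, fun t ht => ?_, by rw [P.north_of_cross h₀, hw]⟩
      rcases Nat.eq_zero_or_pos t with rfl | ht₀
      · exact h₀
      · exact (hbetween t ht₀ ht).1
  intro heq
  rw [hexit] at heq
  rcases P.west_succ_cases h with ⟨hc, hw⟩ | ⟨he, s, hs, hv, -, hw, -⟩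
  · have := eq_of_west_eq hxv (by omega) (heq.trans hw)
    simp [this, hc] at hx
  · have := eq_of_west_eq hxv hv (heq.trans hw.symm)
    simp [hfirst r (by omega)] at he

lemma crossesAt_of_swap {p q a b a' b' c : ℕ} (hp : P.west a c = p) (hq : P.west b c = q)
    (hab : a < b) (hb : b + c + 1 ≤ n) (hp' : P.west a' (c + 1) = p)
    (hq' : P.west b' (c + 1) = q) (ha' : a' + c + 2 ≤ n) (hba' : b' < a') :
    P.CrossesAt p q a c := by
  obtain ⟨s, has, hsv, hs⟩ := P.exists_west_eq_west_succ ha'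
  have hsa : s = a := eq_of_west_eq hsv (by omega) (by rw [hs, hp', hp])
  rcases P.west_succ_cases (r := b') (c := c) (by omega) with
    ⟨-, hw⟩ | ⟨-, t, hbt, htv, -, ht, hbetween⟩
  · have := eq_of_west_eq (r₁ := b') (by omega) hb (by rw [← hw, hq', hq])
    omega
  · have htb : t = b := eq_of_west_eq htv hb (by rw [ht, hq', hq])
    obtain ⟨hc, hs⟩ := hbetween a (by omega) (by omega)
    exact ⟨hc, hp, hs.trans hq'⟩

lemma exists_crossesAt_of_west_gt {p q a b T : ℕ} (hpq : p < q) (hp : P.west a T = p)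
    (hq : P.west b T = q) (hba : b < a) (ha : a + T + 1 ≤ n) :
    ∃ ρ τ, τ < T ∧ P.CrossesAt p q ρ τ := by
  induction T generalizing a b with
  | zero =>
    rw [west_zero] at hp hq
    omega
  | succ T ih =>
    obtain ⟨a', haa, hav, hpa⟩ := P.exists_west_eq_west_succ (r := a) (c := T) (by omega)
    obtain ⟨b', hbb, hbv, hqb⟩ := P.exists_west_eq_west_succ (r := b) (c := T) (by omega)
    rcases lt_trichotomy a' b' with h | rfl | h
    · exact ⟨a', T, by omega, crossesAt_of_swap (hpa.trans hp) (hqb.trans hq) h hbv hp hq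
        (by omega) hba⟩
    · omega
    · obtain ⟨ρ, τ, hτ, hx⟩ := ih (hpa.trans hp) (hqb.trans hq) h hav
      exact ⟨ρ, τ, by omega, hx⟩

lemma Reduced.eq_of_crossesAt (hred : P.Reduced) {p q r c r' c' : ℕ} (h : P.CrossesAt p q r c)
    (h' : P.CrossesAt q p r' c') : r = r' ∧ c = c' := by
  by_contra hne
  exact hred r c r' c' h.1 h'.1 (by simpa using hne)
    (Or.inr ⟨h.2.1.trans h'.2.2.symm, h.2.2.trans h'.2.1.symm⟩)

lemma Reduced.lt_of_crossesAt (hred : P.Reduced) {p q r c : ℕ} (h : P.CrossesAt p q r c) :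
    p < q := by
  obtain ⟨hc, hp, hq⟩ := h
  obtain ⟨r', hr', hv, -, hw, -⟩ := P.exists_elbow_below (P.inShape _ _ hc)
  rcases lt_trichotomy p q with hlt | heq | hgt
  · exact hlt
  · have := eq_of_west_eq (r₂ := r) hv (by omega) (by rw [hw, hp, hq, heq])
    omega
  · obtain ⟨ρ, τ, hτ, hx⟩ := exists_crossesAt_of_west_gt hgt (hw.trans hq) hp hr' hv
    have := hred.eq_of_crossesAt hx ⟨hc, hp, hq⟩
    omega

/-- `q` has crossed `p` from the west in column `c`. -/
lemma Reduced.lt_of_west_succ_between (hred : P.Reduced) {p q r r' t c : ℕ}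
    (hp : P.west r c = p) (hp' : P.west r' (c + 1) = p) (hq : P.west t (c + 1) = q)
    (hrt : r' < t) (htr : t < r) (hv : r + c + 1 ≤ n) : q < p := by
  rcases P.west_succ_cases (r := t) (c := c) (by omega) with
    ⟨-, hw⟩ | ⟨-, s, hts, hsv, -, hs, hbetween⟩
  · exact hred.lt_of_crossesAt
      (crossesAt_of_swap (hw.symm.trans hq) hp htr hv hq hp' (by omega) hrt)
  · rcases lt_trichotomy s r with hsr | hsr | hrs
    · exact hred.lt_of_crossesAt
        (crossesAt_of_swap (hs.trans hq) hp hsr hv hq hp' (by omega) hrt)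
    · have := P.eq_of_west_eq (r₁ := r') (r₂ := t) (c := c + 1) (by omega) (by omega)
        (by rw [hp', ← hp, ← hsr, hs, hq])
      omega
    · have := P.eq_of_west_eq (r₁ := r) (r₂ := r') (c := c + 1) (by omega) (by omega)
        (by rw [west_succ_of_cross (hbetween r htr hrs).1, hp, hp'])
      omega

variable (P) in
/-- Here `P.west r T` is read as the pipe crossing the vertical line `T` in row `r`. -/
def ReachesBelow (T : ℕ) : Prop :=
  ∀ r₁ r₂ s w, P.west r₁ T = s → P.west r₂ T = w → r₁ < r₂ → r₂ + T + 1 ≤ n →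
    (∀ ρ τ, T ≤ τ → ¬ P.CrossesAt s w ρ τ) → P.Path s w

section Reduced

variable (hred : P.Reduced)
include hred

/-- After crossing `w`, the pipe `s` climbs on and turns east above `w`; as the two never
cross again, `s` reaches `w`. -/
theorem path_of_crossesAt {w s r T : ℕ} (hR : P.ReachesBelow (T + 1))
    (hx : P.CrossesAt w s r T) (hs : P.exitPipe T ≠ s) : P.Path s w := by
  obtain ⟨hc, hw, hsouth⟩ := hx
  have hv := P.inShape _ _ hc
  rcases P.north_eq_or_exists_west_succ_eq (c := T) (Nat.zero_le r) (by omega) with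
    h₀ | ⟨t, -, htr, ht⟩
  · exact absurd (by rw [exitPipe_eq_north, h₀, P.north_of_cross hc, hsouth]) hs
  refine hR t r s w (by rw [ht, P.north_of_cross hc, hsouth])
    (by rw [P.west_succ_of_cross hc, hw]) htr hv fun ρ τ hτ hx => ?_
  have := hred.eq_of_crossesAt hx ⟨hc, hw, hsouth⟩
  omega

/-- The pipe `P.south r₀ C` climbed column `C` from the next elbow `r'` below: if `r' < r`, it
points there to the pipe turning east at `r'`, and we recurse; if `r' > r`, it crossed
`P.west r (C + 1)` on its way up. -/
theorem path_of_elbow {r₀ r C : ℕ} (hR : P.ReachesBelow (C + 1)) (hv : r₀ + C + 2 ≤ n)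
    (he : P.cross r₀ C = false) (hlt : r₀ < r) (hr : r + C + 2 ≤ n) :
    P.Path (P.south r₀ C) (P.west r (C + 1)) := by
  obtain ⟨r', hr', hv', he', hw, hbetween⟩ := P.exists_elbow_below hv
  rcases lt_trichotomy r' r with h | rfl | h
  · exact .head ⟨r', C, by omega, he', hw, rfl⟩ (path_of_elbow hR (by omega) he' h hr)
  · exact .single ⟨r', C, hr, he', hw, (P.west_succ_of_elbow he').symm⟩
  · obtain ⟨hc, hs⟩ := hbetween r hlt h
    rw [P.west_succ_of_cross hc]
    refine P.path_of_crossesAt hred hR ⟨hc, rfl, hs⟩ ?_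
    rw [← P.west_succ_of_elbow he]
    exact P.exitPipe_ne_west_succ hv
termination_by r - r₀

theorem reachesBelow_of_succ {T : ℕ} (hR : P.ReachesBelow (T + 1)) : P.ReachesBelow T := by
  intro r₁ r₂ s w hs hw hlt hv hno
  have hw' : (∃ r, r₁ < r ∧ r + T + 2 ≤ n ∧ P.west r (T + 1) = w) ∨ P.Arc s w := by
    cases hx₂ : P.cross r₂ T
    · rcases P.north_eq_or_exists_west_succ_eq (c := T) (Nat.succ_le_of_lt hlt) hv with
        h | ⟨t, ht₁, ht₂, ht⟩
      · have hsouth : P.south r₁ T = w := by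
          rw [P.south_eq_north_succ (by omega), h, P.north_of_elbow hx₂, hw]
        cases hx₁ : P.cross r₁ T
        · exact Or.inr ⟨r₁, T, by omega, hx₁, hs, hsouth⟩
        · exact absurd ⟨hx₁, hs, hsouth⟩ (hno r₁ T le_rfl)
      · exact Or.inl ⟨t, by omega, by omega, by rw [ht, P.north_of_elbow hx₂, hw]⟩
    · exact Or.inl ⟨r₂, hlt, P.inShape _ _ hx₂, by rw [P.west_succ_of_cross hx₂, hw]⟩
  rcases hw' with ⟨r, hr, hrv, hrw⟩ | harc
  · cases hx₁ : P.cross r₁ T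
    · rw [← hrw]
      exact .head ⟨r₁, T, by omega, hx₁, hs, rfl⟩
        (P.path_of_elbow hred hR (by omega) hx₁ hr hrv)
    · exact hR r₁ r s w (by rw [P.west_succ_of_cross hx₁, hs]) hrw hr (by omega)
        fun ρ τ hτ => hno ρ τ (by omega)
  · exact .single harc

theorem reachesBelow (T : ℕ) : P.ReachesBelow T := by
  by_cases hT : T < n
  · exact P.reachesBelow_of_succ hred (reachesBelow (T + 1))
  · intro r₁ r₂ s w _ _ _ hv
    omega
termination_by n - T

end Reduced

lemma exists_west_succ_eq_or_exitPipe_eq {r C p : ℕ} (h : P.west r C = p)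
    (hv : r + C + 1 ≤ n) :
    (∃ r', r' + C + 2 ≤ n ∧ P.west r' (C + 1) = p) ∨ P.exitPipe C = p := by
  subst h
  cases hx : P.cross r C
  · rw [← P.north_of_elbow hx]
    rcases P.north_eq_or_exists_west_succ_eq (Nat.zero_le r) hv with h₀ | ⟨t, -, htr, ht⟩
    · exact Or.inr h₀
    · exact Or.inl ⟨t, by omega, ht⟩
  · exact Or.inl ⟨r, P.inShape _ _ hx, P.west_succ_of_cross hx⟩

section ExitPerm

variable {ω : Equiv.Perm (Fin n)} (hexit : P.HasExitPerm ω)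
include hexit

lemma inv_apply_eq_of_exitPipe_eq {C : ℕ} (hC : C < n) {p : Fin n} (h : P.exitPipe C = p) :
    ((ω⁻¹ p : Fin n) : ℕ) = C := by
  rw [Equiv.Perm.inv_eq_iff_eq.mpr (Fin.ext (h.symm.trans (hexit ⟨C, hC⟩)))]

lemma exitPipe_ne_of_lt_inv_apply {C : ℕ} {p : Fin n} (h : C < ((ω⁻¹ p : Fin n) : ℕ)) :
    P.exitPipe C ≠ p := fun he => by
  have := P.inv_apply_eq_of_exitPipe_eq hexit (by omega) he
  omega

lemma le_inv_apply_of_west_eq {r C : ℕ} {p : Fin n} (h : P.west r C = p) (hv : r + C + 1 ≤ n) :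
    C ≤ ((ω⁻¹ p : Fin n) : ℕ) := by
  rcases P.exists_west_succ_eq_or_exitPipe_eq h hv with ⟨r', hv', h'⟩ | h'
  · have := le_inv_apply_of_west_eq h' (by omega)
    omega
  · rw [P.inv_apply_eq_of_exitPipe_eq hexit (by omega) h']
termination_by n - C

lemma exists_west_eq_of_le_inv_apply {p : Fin n} :
    ∀ {C : ℕ}, C ≤ ((ω⁻¹ p : Fin n) : ℕ) → ∃ r, r + C + 1 ≤ n ∧ P.west r C = p
  | 0, _ => ⟨p, by omega, P.west_zero p⟩
  | C + 1, hC => by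
    have := (ω⁻¹ p).isLt
    obtain ⟨r, hv, h⟩ := exists_west_eq_of_le_inv_apply (p := p) (C := C) (by omega)
    rcases P.exists_west_succ_eq_or_exitPipe_eq h hv with ⟨r', hv', h'⟩ | h'
    · exact ⟨r', by omega, h'⟩
    · exact absurd h' (P.exitPipe_ne_of_lt_inv_apply hexit (p := p) (by omega))

theorem Reduced.path_of_lt_of_west_gt (hred : P.Reduced) {p q : Fin n} (hpq : p < q)
    {a b C : ℕ} (ha : P.west a C = p) (hb : P.west b C = q) (hba : b < a)
    (hv : a + C + 1 ≤ n) : P.Path q p := by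
  obtain ⟨ρ, τ, hτ, hx⟩ := exists_crossesAt_of_west_gt hpq ha hb hba hv
  refine P.path_of_crossesAt hred (P.reachesBelow hred _) hx
    (P.exitPipe_ne_of_lt_inv_apply hexit ?_)
  have := P.le_inv_apply_of_west_eq hexit hb (by omega)
  omega

end ExitPerm

end PipeDream

/-- Let `ω ∈ S_n`, `P ∈ Π(ω)`, and let `i, j, k` be pipes with
`i < j < k` and `ω⁻¹ i > ω⁻¹ j > ω⁻¹ k`.  If the contact graph `P♯` has an arc
`i → k`, then either (`i ⪯_P j` and `k ⪯_P j`) or (`j ⪯_P i` and `j ⪯_P k`). -/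
theorem path_of_arc_between (n : ℕ) (ω : Equiv.Perm (Fin n)) (P : PipeDream n)
    (hred : P.Reduced) (hexit : P.HasExitPerm ω)
    (i j k : Fin n) (hij : i < j) (hjk : j < k)
    (hw1 : ω⁻¹ j < ω⁻¹ i) (hw2 : ω⁻¹ k < ω⁻¹ j)
    (harc : P.Arc i.val k.val) :
    (P.Path i.val j.val ∧ P.Path k.val j.val) ∨
    (P.Path j.val i.val ∧ P.Path j.val k.val) := by
  obtain ⟨r, c, hv, he, hi, hk⟩ := id harc
  have hkW : P.west r (c + 1) = k := (P.west_succ_of_elbow he).trans hk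
  have hck := P.le_inv_apply_of_west_eq hexit hkW (by omega)
  obtain ⟨ri, hri, hiW⟩ : ∃ ri < r, P.west ri (c + 1) = i := by
    rcases P.north_eq_or_exists_west_succ_eq (c := c) (Nat.zero_le r) (by omega) with
      h₀ | ⟨t, -, htr, ht⟩
    · refine absurd ?_ (P.exitPipe_ne_of_lt_inv_apply hexit (C := c) (p := i) (by omega))
      rw [PipeDream.exitPipe_eq_north, h₀, P.north_of_elbow he, hi]
    · exact ⟨t, htr, by rw [ht, P.north_of_elbow he, hi]⟩
  obtain ⟨rj, hrj, hjW⟩ :=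
    P.exists_west_eq_of_le_inv_apply hexit (p := j) (C := c + 1) (by omega)
  rcases lt_or_ge r rj with hk_above | hle_r
  · have hkj := hred.path_of_lt_of_west_gt hexit hjk hjW hkW hk_above hrj
    exact Or.inl ⟨.head harc hkj, hkj⟩
  rcases lt_or_ge rj ri with hj_above | hge_ri
  · have hji := hred.path_of_lt_of_west_gt hexit hij hiW hjW hj_above (by omega)
    exact Or.inr ⟨hji, hji.tail harc⟩
  have hne_i : rj ≠ ri := fun h => by subst h; omega
  have hne_k : rj ≠ r := fun h => by subst h; omega
  have := hred.lt_of_west_succ_between hi hiW hjW (by omega) (by omega) (by omega)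
  omega
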